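/- Let H, V be real Hilbert spaces with V continuously embedded in H, A* : V → V* bounded linear, symmetric, monotone, and coercive in the sense that ⟨A*w,w⟩ + ‖w‖²_H ≥ ω‖w‖²_V for some ω > 0 and all w ∈ V. Let B : H → H be linear monotone and Φ_λ : H → H monotone with Φ_λ(0) = 0, ℒ : H → H Lipschitz with constant C_ℒ, L : H → H bounded linear with (Lw,w) ≥ c_L‖w‖². Then for h > 0 small enough (explicitly, whenever c_L - h² - C_ℒh² > 0), the operator Ψ : V → V* defined by ⟨Ψφ, w⟩ := (Lφ,w)_H + h⟨B*φ,w⟩ + h²⟨A*φ,w⟩ + h²(Φ_λφ, w)_H + h²(ℒφ, w)_H satisfies ⟨Ψφ - Ψψ, φ - ψ⟩ ≥ ω h² ‖φ - ψ‖²_V for all φ, ψ ∈ V; in particular Ψ is strongly monotone. -/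

import Mathlib

/-!
Put `w = φ - ψ` and `x = ι w`. The terms in `L`, `A`, `ℒ` are bounded below by `c_L ‖x‖²`,
`h² (ω ‖w‖² - ‖x‖²)` and `-C_ℒ h² ‖x‖²`, and the `B` and `Φ` terms are nonnegative. Summing,
the expression is at least `ω h² ‖w‖² + (c_L - h² - C_ℒ h²) ‖x‖²`, and the smallness condition
on `h` makes the second summand nonnegative.
-/

open scoped RealInnerProductSpace NNReal

theorem LipschitzWith.neg_mul_sq_le_inner_sub {E : Type*} [NormedAddCommGroup E]
    [InnerProductSpace ℝ E] {K : ℝ≥0} {f : E → E} (hf : LipschitzWith K f) (x y : E) :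
    -(K * ‖x - y‖ ^ 2) ≤ ⟪f x - f y, x - y⟫ := by
  have hfxy : ‖f x - f y‖ ≤ K * ‖x - y‖ := by
    simpa only [dist_eq_norm] using hf.dist_le_mul x y
  have : ‖f x - f y‖ * ‖x - y‖ ≤ K * ‖x - y‖ ^ 2 := by
    rw [sq, ← mul_assoc]
    exact mul_le_mul_of_nonneg_right hfxy (norm_nonneg _)
  linarith [neg_abs_le ⟪f x - f y, x - y⟫, abs_real_inner_le_norm (f x - f y) (x - y)]

theorem stmt9_general {V H : Type*}
    [NormedAddCommGroup V] [InnerProductSpace ℝ V]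
    [NormedAddCommGroup H] [InnerProductSpace ℝ H]
    (ι : V →L[ℝ] H)
    (A : V →L[ℝ] (V →L[ℝ] ℝ))
    (ω : ℝ)
    (hAcoer : ∀ w : V, A w w + ‖ι w‖ ^ 2 ≥ ω * ‖w‖ ^ 2)
    (B : V →L[ℝ] (V →L[ℝ] ℝ)) (hBmono : ∀ w : V, 0 ≤ B w w)
    (Φ : H → H)
    (hΦmono : ∀ x y : H, 0 ≤ ⟪Φ x - Φ y, x - y⟫)
    (ℒ : H → H) (CL : ℝ) (hCL : 0 ≤ CL) (hℒ : LipschitzWith (Real.toNNReal CL) ℒ)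
    (L : H →L[ℝ] H) (cL : ℝ)
    (hLcoer : ∀ w : H, ⟪L w, w⟫ ≥ cL * ‖w‖ ^ 2)
    (h : ℝ) (hh : 0 < h) (hsmall : 0 < cL - h ^ 2 - CL * h ^ 2) :
    ∀ φ ψ : V,
      ⟪L (ι φ) - L (ι ψ), ι φ - ι ψ⟫
        + h * B (φ - ψ) (φ - ψ)
        + h ^ 2 * A (φ - ψ) (φ - ψ)
        + h ^ 2 * ⟪Φ (ι φ) - Φ (ι ψ), ι φ - ι ψ⟫
        + h ^ 2 * ⟪ℒ (ι φ) - ℒ (ι ψ), ι φ - ι ψ⟫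
      ≥ ω * h ^ 2 * ‖φ - ψ‖ ^ 2 := by
  intro φ ψ
  have hL : cL * ‖ι φ - ι ψ‖ ^ 2 ≤ ⟪L (ι φ) - L (ι ψ), ι φ - ι ψ⟫ := by
    rw [← map_sub L]
    exact hLcoer _
  have hA : ω * ‖φ - ψ‖ ^ 2 ≤ A (φ - ψ) (φ - ψ) + ‖ι φ - ι ψ‖ ^ 2 := by
    rw [← map_sub ι]
    exact hAcoer _
  have hℒ' : -(CL * ‖ι φ - ι ψ‖ ^ 2) ≤ ⟪ℒ (ι φ) - ℒ (ι ψ), ι φ - ι ψ⟫ := by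
    simpa only [Real.coe_toNNReal CL hCL] using hℒ.neg_mul_sq_le_inner_sub (ι φ) (ι ψ)
  have hh2 : 0 ≤ h ^ 2 := sq_nonneg h
  linarith [mul_nonneg hh.le (hBmono (φ - ψ)), mul_le_mul_of_nonneg_left hA hh2,
    mul_nonneg hh2 (hΦmono (ι φ) (ι ψ)), mul_le_mul_of_nonneg_left hℒ' hh2,
    mul_nonneg hsmall.le (sq_nonneg ‖ι φ - ι ψ‖)]

/-- Strong monotonicity of the discrete operator `Ψ`: under the structural assumptions
on `L, B*, A*, Φ_λ, ℒ`, if `c_L - h² - C_ℒ h² > 0` then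
`⟨Ψφ - Ψψ, φ - ψ⟩ ≥ ω h² ‖φ - ψ‖²_V` for all `φ, ψ ∈ V`. -/
theorem stmt9 {V H : Type*}
    [NormedAddCommGroup V] [InnerProductSpace ℝ V] [CompleteSpace V]
    [NormedAddCommGroup H] [InnerProductSpace ℝ H] [CompleteSpace H]
    (ι : V →L[ℝ] H) (hι : ∀ w : V, ‖ι w‖ ≤ ‖w‖)
    (A : V →L[ℝ] (V →L[ℝ] ℝ))
    (hAsym : ∀ w z : V, A w z = A z w)
    (hAmono : ∀ w : V, 0 ≤ A w w)
    (ω : ℝ) (hω : 0 < ω)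
    (hAcoer : ∀ w : V, A w w + ‖ι w‖ ^ 2 ≥ ω * ‖w‖ ^ 2)
    (B : V →L[ℝ] (V →L[ℝ] ℝ)) (hBmono : ∀ w : V, 0 ≤ B w w)
    (Φ : H → H) (hΦ0 : Φ 0 = 0)
    (hΦmono : ∀ x y : H, 0 ≤ ⟪Φ x - Φ y, x - y⟫)
    (ℒ : H → H) (CL : ℝ) (hCL : 0 ≤ CL) (hℒ : LipschitzWith (Real.toNNReal CL) ℒ)
    (L : H →L[ℝ] H) (cL : ℝ) (hcL : 0 < cL)
    (hLcoer : ∀ w : H, ⟪L w, w⟫ ≥ cL * ‖w‖ ^ 2)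
    (h : ℝ) (hh : 0 < h) (hsmall : 0 < cL - h ^ 2 - CL * h ^ 2) :
    ∀ φ ψ : V,
      ⟪L (ι φ) - L (ι ψ), ι φ - ι ψ⟫
        + h * B (φ - ψ) (φ - ψ)
        + h ^ 2 * A (φ - ψ) (φ - ψ)
        + h ^ 2 * ⟪Φ (ι φ) - Φ (ι ψ), ι φ - ι ψ⟫
        + h ^ 2 * ⟪ℒ (ι φ) - ℒ (ι ψ), ι φ - ι ψ⟫
      ≥ ω * h ^ 2 * ‖φ - ψ‖ ^ 2 :=
  stmt9_general ι A ω hAcoer B hBmono Φ hΦmono ℒ CL hCL hℒ L cL hLcoer h hh hsmall
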